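/- arXiv:quant-ph/0403188 — 2 statements merged into one kernel-verified Lean document; each statement's English description precedes it below -/
import Mathlib

section
/- Let ℰ be a quantum channel on ℂ^d. The zero-error capacity satisfies C⁰(ℰ) > 0 if and only if there exist density matrices ρ_a and ρ_b on ℂ^d and a POVM {E_j}_{j∈J} on ℂ^d such that ℰ(ρ_a) and ℰ(ρ_b) are non-adjacent under {E_j}_{j∈J}, i.e., the sets A_a = {j ∈ J : tr(ℰ(ρ_a) E_j) > 0} and A_b = {j ∈ J : tr(ℰ(ρ_b) E_j) > 0} are disjoint. -/
open Matrix BigOperators ComplexOrder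

/-- `d × d` complex matrices. -/
abbrev Mat (d : ℕ) : Type := Matrix (Fin d) (Fin d) ℂ

/-- A density matrix: positive semidefinite with trace 1. -/
def IsDensityMatrix {d : ℕ} (ρ : Mat d) : Prop :=
  ρ.PosSemidef ∧ ρ.trace = 1

/-- A POVM with (finite) outcome set `Fin N`. -/
def IsPOVM {d N : ℕ} (E : Fin N → Mat d) : Prop :=
  (∀ j, (E j).PosSemidef) ∧ ∑ j, E j = 1

/-- A quantum channel: linear, trace preserving, positivity preserving. -/
def IsQuantumChannel {d : ℕ} (ℰ : Mat d →ₗ[ℂ] Mat d) : Prop :=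
  (∀ ρ, (ℰ ρ).trace = ρ.trace) ∧ (∀ ρ : Mat d, ρ.PosSemidef → (ℰ ρ).PosSemidef)

/-- Probability of measurement outcome with effect `E` on state `σ`: `tr (σ E)`. -/
noncomputable def prob {d : ℕ} (σ E : Mat d) : ℝ := (Matrix.trace (σ * E)).re

/-- Two states are non-adjacent under a POVM if no outcome has positive
probability for both. -/
def NonAdjacent {d N : ℕ} (σa σb : Mat d) (E : Fin N → Mat d) : Prop :=
  ∀ j, ¬ (0 < prob σa (E j) ∧ 0 < prob σb (E j))

/-- The `n`-fold Kronecker product of `d × d` matrices, as a `d^n × d^n` matrix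
(identifying `(ℂ^d)^{⊗n}` with `ℂ^{d^n}`). -/
def kronPow {d n : ℕ} (M : Fin n → Mat d) : Mat (d ^ n) :=
  Matrix.of fun x y =>
    ∏ i, M i (finFunctionFinEquiv.symm x i) (finFunctionFinEquiv.symm y i)

/-- There is a zero-error quantum block code of length `n` and size `K` for `ℰ`. -/
def CodeExists {d : ℕ} (ℰ : Mat d →ₗ[ℂ] Mat d) (n K : ℕ) : Prop :=
  ∃ (ρ : Fin K → Fin n → Mat d) (N : ℕ) (E : Fin N → Mat (d ^ n)) (g : Fin N → Fin K),
    (∀ k i, IsDensityMatrix (ρ k i)) ∧ IsPOVM E ∧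
    ∀ k j, 0 < prob (kronPow fun i => ℰ (ρ k i)) (E j) → g j = k

/-- `K(n)`: the largest size of a zero-error quantum block code of length `n`. -/
noncomputable def maxK {d : ℕ} (ℰ : Mat d →ₗ[ℂ] Mat d) (n : ℕ) : ℕ :=
  sSup {K | CodeExists ℰ n K}

/-- The zero-error capacity `C⁰(ℰ) = sup_n (1/n) log K(n)`. -/
noncomputable def C0 {d : ℕ} (ℰ : Mat d →ₗ[ℂ] Mat d) : ℝ :=
  ⨆ n : ℕ+, Real.log (maxK ℰ (n : ℕ)) / (n : ℝ)

lemma trace_ctc {m : ℕ} (C : Mat m) :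
    (Cᴴ * C).trace = ((∑ j, ∑ i, Complex.normSq (C i j) : ℝ) : ℂ) := by
  simp only [Matrix.trace, Matrix.diag, Matrix.mul_apply, Matrix.conjTranspose_apply]
  push_cast
  refine Finset.sum_congr rfl fun j _ => Finset.sum_congr rfl fun i _ => ?_
  rw [Complex.star_def, ← Complex.normSq_eq_conj_mul_self]

theorem Matrix.posSemidef_iff_eq_transpose_mul_self {n : Type*} [Fintype n] [DecidableEq n]
    {A : Matrix n n ℂ} : A.PosSemidef ↔ ∃ B : Matrix n n ℂ, A = Bᴴ * B := by
  open scoped MatrixOrder in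
  constructor
  · intro hA
    obtain ⟨B, hB⟩ := CStarAlgebra.nonneg_iff_eq_star_mul_self.mp hA.nonneg
    exact ⟨B, hB⟩
  · rintro ⟨B, rfl⟩
    exact posSemidef_conjTranspose_mul_self B

lemma psd_key {m : ℕ} {A B : Mat m} (hA : A.PosSemidef) (hB : B.PosSemidef) :
    0 ≤ prob A B ∧ (A * B).trace = (prob A B : ℂ) ∧ (prob A B = 0 → A * B = 0) := by
  obtain ⟨X, hX⟩ := Matrix.posSemidef_iff_eq_transpose_mul_self.mp hA
  obtain ⟨Y, hY⟩ := Matrix.posSemidef_iff_eq_transpose_mul_self.mp hB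
  have htr : (A * B).trace = ((Y * Xᴴ)ᴴ * (Y * Xᴴ)).trace := by
    rw [hX, hY, Matrix.conjTranspose_mul, Matrix.conjTranspose_conjTranspose]
    rw [show Xᴴ * X * (Yᴴ * Y) = Xᴴ * (X * (Yᴴ * Y)) by simp [Matrix.mul_assoc]]
    rw [Matrix.trace_mul_comm]
    simp [Matrix.mul_assoc]
  set C := Y * Xᴴ with hC
  have h1 : (A * B).trace = ((∑ j, ∑ i, Complex.normSq (C i j) : ℝ) : ℂ) := by
    rw [htr, trace_ctc]
  have hre : prob A B = ∑ j, ∑ i, Complex.normSq (C i j) := by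
    unfold prob; rw [h1]; simp
  have hnn : 0 ≤ prob A B := by
    rw [hre]; exact Finset.sum_nonneg fun j _ => Finset.sum_nonneg fun i _ => Complex.normSq_nonneg _
  refine ⟨hnn, by rw [h1, hre], ?_⟩
  intro h0
  rw [hre] at h0
  have hent : ∀ i j, C i j = 0 := by
    intro i j
    have h2 := (Finset.sum_eq_zero_iff_of_nonneg
      (fun j _ => Finset.sum_nonneg fun i _ => Complex.normSq_nonneg _)).mp h0 j
      (Finset.mem_univ _)
    have h3 := (Finset.sum_eq_zero_iff_of_nonneg
      (fun i _ => Complex.normSq_nonneg _)).mp h2 i (Finset.mem_univ _)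
    exact Complex.normSq_eq_zero.mp h3
  have hCz : C = 0 := Matrix.ext fun i j => hent i j
  have hXY : X * Yᴴ = 0 := by
    have h4 : Cᴴ = 0 := by rw [hCz]; simp
    rw [hC, Matrix.conjTranspose_mul, Matrix.conjTranspose_conjTranspose] at h4
    exact h4
  rw [hX, hY, show Xᴴ * X * (Yᴴ * Y) = Xᴴ * ((X * Yᴴ) * Y) by simp [Matrix.mul_assoc], hXY]
  simp

lemma kronPow_mul {d n : ℕ} (M N : Fin n → Mat d) :
    kronPow M * kronPow N = kronPow fun i => M i * N i := by
  ext x y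
  simp only [kronPow, Matrix.mul_apply, Matrix.of_apply]
  rw [← Equiv.sum_comp (finFunctionFinEquiv (m := d) (n := n))]
  simp only [Equiv.symm_apply_apply]
  rw [Finset.prod_univ_sum, Fintype.piFinset_univ]
  exact Finset.sum_congr rfl fun f _ => (Finset.prod_mul_distrib).symm

lemma kronPow_conjTranspose {d n : ℕ} (M : Fin n → Mat d) :
    (kronPow M)ᴴ = kronPow fun i => (M i)ᴴ := by
  ext x y
  simp [kronPow, Matrix.conjTranspose_apply, star_prod]

lemma kronPow_trace {d n : ℕ} (M : Fin n → Mat d) :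
    (kronPow M).trace = ∏ i, (M i).trace := by
  simp only [Matrix.trace, Matrix.diag, kronPow, Matrix.of_apply]
  rw [← Equiv.sum_comp (finFunctionFinEquiv (m := d) (n := n))]
  simp only [Equiv.symm_apply_apply]
  rw [Finset.prod_univ_sum, Fintype.piFinset_univ]

lemma kronPow_posSemidef {d n : ℕ} {M : Fin n → Mat d} (h : ∀ i, (M i).PosSemidef) :
    (kronPow M).PosSemidef := by
  choose X hX using fun i => Matrix.posSemidef_iff_eq_transpose_mul_self.mp (h i)
  rw [show M = fun i => (X i)ᴴ * X i from funext hX, ← kronPow_mul, ← kronPow_conjTranspose]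
  exact Matrix.posSemidef_conjTranspose_mul_self _

lemma kronPow_ne_zero {d n : ℕ} {M : Fin n → Mat d} (h : ∀ i, M i ≠ 0) :
    kronPow M ≠ 0 := by
  have h' : ∀ i, ∃ p : Fin d × Fin d, M i p.1 p.2 ≠ 0 := by
    intro i
    by_contra hc
    push_neg at hc
    exact h i (Matrix.ext fun a b => hc (a, b))
  choose p hp using h'
  intro hz
  have h0 : kronPow M (finFunctionFinEquiv fun i => (p i).1)
      (finFunctionFinEquiv fun i => (p i).2) = 0 := by rw [hz]; rfl
  simp only [kronPow, Matrix.of_apply, Equiv.symm_apply_apply] at h0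
  obtain ⟨i, _, hi⟩ := Finset.prod_eq_zero_iff.mp h0
  exact hp i hi

lemma exists_support_proj {m : ℕ} {A B : Mat m} (hA : A.PosSemidef) (hB : B.PosSemidef)
    (hAB : A * B = 0) :
    ∃ F : Mat m, F.PosSemidef ∧ (1 - F).PosSemidef ∧ A * F = A ∧ B * F = 0 := by
  have h := hA.1
  set V : Mat m := (h.eigenvectorUnitary : Mat m) with hVdef
  have hVV : Vᴴ * V = 1 := by
    simpa [Matrix.star_eq_conjTranspose] using (Unitary.mem_iff.mp h.eigenvectorUnitary.2).1
  have hVV' : V * Vᴴ = 1 := by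
    simpa [Matrix.star_eq_conjTranspose] using (Unitary.mem_iff.mp h.eigenvectorUnitary.2).2
  set lam := h.eigenvalues with hlam
  set χ : Fin m → ℝ := fun i => if lam i = 0 then 0 else 1 with hχ
  set D : Mat m := Matrix.diagonal (RCLike.ofReal ∘ lam) with hD
  have hspec : A = V * D * Vᴴ := by
    exact h.spectral_theorem
  set F : Mat m := V * Matrix.diagonal (RCLike.ofReal ∘ χ) * Vᴴ with hF
  have hχnn : ∀ i, (0:ℂ) ≤ (RCLike.ofReal ∘ χ) i := by
    intro i
    simp only [Function.comp, hχ]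
    split <;> norm_num
  have hFpsd : F.PosSemidef := (Matrix.posSemidef_diagonal_iff.mpr hχnn).mul_mul_conjTranspose_same V
  have h1F : 1 - F = V * Matrix.diagonal (RCLike.ofReal ∘ fun i => 1 - χ i) * Vᴴ := by
    have : Matrix.diagonal (RCLike.ofReal ∘ fun i => 1 - χ i)
        = (1 : Mat m) - Matrix.diagonal (RCLike.ofReal ∘ χ) := by
      ext i j
      by_cases hij : i = j
      · subst hij
        simp [Matrix.sub_apply]
      · simp [Matrix.sub_apply, Matrix.diagonal_apply_ne _ hij, Matrix.one_apply_ne hij]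
    rw [this, Matrix.mul_sub, Matrix.sub_mul, Matrix.mul_one, hVV']
  have h1Fpsd : (1 - F).PosSemidef := by
    rw [h1F]
    refine (Matrix.posSemidef_diagonal_iff.mpr ?_).mul_mul_conjTranspose_same V
    intro i
    simp only [Function.comp, hχ]
    split <;> norm_num
  have hAF : A * F = A := by
    rw [hspec, hF]
    calc V * D * Vᴴ * (V * Matrix.diagonal (RCLike.ofReal ∘ χ) * Vᴴ)
        = V * (D * (Vᴴ * V) * Matrix.diagonal (RCLike.ofReal ∘ χ)) * Vᴴ := by
          simp only [Matrix.mul_assoc]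
      _ = V * (D * Matrix.diagonal (RCLike.ofReal ∘ χ)) * Vᴴ := by rw [hVV]; simp [Matrix.mul_assoc]
      _ = V * D * Vᴴ := by
          have hDχ : D * Matrix.diagonal (RCLike.ofReal ∘ χ) = D := by
            rw [hD, Matrix.diagonal_mul_diagonal]
            refine congrArg Matrix.diagonal (funext fun i => ?_)
            by_cases h0 : lam i = 0 <;> simp [hχ, h0]
          rw [hDχ]
  have hFB : F * B = 0 := by
    have hDT : D * (Vᴴ * B) = 0 := by
      have : Vᴴ * (A * B) = 0 := by rw [hAB, Matrix.mul_zero]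
      rw [hspec] at this
      calc D * (Vᴴ * B) = (Vᴴ * V) * D * (Vᴴ * B) := by rw [hVV]; simp [Matrix.mul_assoc]
        _ = Vᴴ * (V * D * Vᴴ * B) := by simp [Matrix.mul_assoc]
        _ = 0 := this
    have hXT : Matrix.diagonal (RCLike.ofReal ∘ χ) * (Vᴴ * B) = 0 := by
      ext i j
      have hij := congrFun (congrFun hDT i) j
      simp only [hD, Matrix.diagonal_mul, Matrix.zero_apply] at hij ⊢
      simp only [Function.comp, hχ]
      split
      · simp
      · next hne =>
        have : (RCLike.ofReal (lam i) : ℂ) ≠ 0 := by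
          simpa using hne
        field_simp
        simpa using (mul_eq_zero.mp hij).resolve_left this
    calc F * B = V * (Matrix.diagonal (RCLike.ofReal ∘ χ) * (Vᴴ * B)) := by
          simp [hF, Matrix.mul_assoc]
      _ = 0 := by rw [hXT, Matrix.mul_zero]
  have hBF : B * F = 0 := by
    have : (F * B)ᴴ = 0 := by rw [hFB]; simp
    rwa [Matrix.conjTranspose_mul, hB.1.eq, hFpsd.1.eq] at this
  exact ⟨F, hFpsd, h1Fpsd, hAF, hBF⟩

lemma posSemidef_sum {m : ℕ} {ι : Type*} (s : Finset ι) (f : ι → Mat m)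
    (h : ∀ j ∈ s, (f j).PosSemidef) : (∑ j ∈ s, f j).PosSemidef := by
  classical
  induction s using Finset.induction_on with
  | empty => simpa using Matrix.PosSemidef.zero
  | insert a s hns ih =>
    rw [Finset.sum_insert hns]
    exact (h a (Finset.mem_insert_self a s)).add (ih fun j hj => h j (Finset.mem_insert_of_mem hj))

lemma codeExists_card_le {d : ℕ} {ℰ : Mat d →ₗ[ℂ] Mat d} (hℰ : IsQuantumChannel ℰ)
    {n K : ℕ} (h : CodeExists ℰ n K) : K ≤ d ^ n * d ^ n * 2 := by
  classical
  obtain ⟨ρ, N, E, g, hρ, hE, hg⟩ := h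
  set σ : Fin K → Mat (d ^ n) := fun k => kronPow fun i => ℰ (ρ k i) with hσ
  have hσpsd : ∀ k, (σ k).PosSemidef := fun k => kronPow_posSemidef fun i => hℰ.2 _ (hρ k i).1
  have hσtr : ∀ k, (σ k).trace = 1 := by
    intro k
    rw [hσ]
    simp only
    rw [kronPow_trace]
    rw [Finset.prod_eq_one fun i _ => by rw [hℰ.1, (hρ k i).2]]
  have hprob0 : ∀ (l : Fin K) (j : Fin N), g j ≠ l → prob (σ l) (E j) = 0 := by
    intro l j hne
    rcases lt_or_eq_of_le ((psd_key (hσpsd l) (hE.1 j)).1) with hlt | heq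
    · exact absurd (hg l j hlt) hne
    · exact heq.symm
  have hsum : ∀ l k : Fin K,
      (∑ j ∈ Finset.univ.filter (fun j => g j = k), prob (σ l) (E j)) =
        if l = k then 1 else 0 := by
    intro l k
    by_cases hlk : l = k
    · subst hlk
      simp only [if_pos rfl]
      have hall : ∑ j, prob (σ l) (E j) = 1 := by
        have : (∑ j, (σ l * E j).trace) = (1 : ℂ) := by
          rw [← Matrix.trace_sum, ← Finset.mul_sum, hE.2, Matrix.mul_one, hσtr]
        calc ∑ j, prob (σ l) (E j) = (∑ j, (σ l * E j).trace).re := by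
              rw [Complex.re_sum]; rfl
          _ = 1 := by rw [this]; simp
      rw [← hall, ← Finset.sum_filter_add_sum_filter_not Finset.univ (fun j => g j = l)]
      have hz : ∑ j ∈ Finset.univ.filter (fun j => ¬ g j = l), prob (σ l) (E j) = 0 :=
        Finset.sum_eq_zero fun j hj => hprob0 l j (Finset.mem_filter.mp hj).2
      rw [hz, add_zero]
      simp
    · simp only [if_neg hlk]
      refine Finset.sum_eq_zero fun j hj => hprob0 l j ?_
      rw [(Finset.mem_filter.mp hj).2]
      exact fun hh => hlk hh.symm
  have li : LinearIndependent ℝ σ := by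
    rw [Fintype.linearIndependent_iff]
    intro c hc k
    have h0 : (∑ j ∈ Finset.univ.filter (fun j => g j = k),
        ((∑ l, c l • σ l) * E j).trace).re = 0 := by
      rw [hc]
      simp
    have expand : ∀ j : Fin N, ((∑ l, c l • σ l) * E j).trace
        = ∑ l, ((c l : ℝ) : ℂ) * (σ l * E j).trace := by
      intro j
      rw [Finset.sum_mul, Matrix.trace_sum]
      refine Finset.sum_congr rfl fun l _ => ?_
      rw [smul_mul_assoc, Matrix.trace_smul, Complex.real_smul]
    have h1 : (∑ j ∈ Finset.univ.filter (fun j => g j = k),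
        ((∑ l, c l • σ l) * E j).trace).re
        = ∑ l, c l * ∑ j ∈ Finset.univ.filter (fun j => g j = k), prob (σ l) (E j) := by
      rw [Complex.re_sum]
      have : ∀ j ∈ Finset.univ.filter (fun j => g j = k),
          (((∑ l, c l • σ l) * E j).trace).re = ∑ l, c l * prob (σ l) (E j) := by
        intro j _
        rw [expand j, Complex.re_sum]
        refine Finset.sum_congr rfl fun l _ => ?_
        rw [Complex.re_ofReal_mul]
        rfl
      rw [Finset.sum_congr rfl this, Finset.sum_comm]
      exact Finset.sum_congr rfl fun l _ => (Finset.mul_sum _ _ _).symm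
    rw [h1] at h0
    have h2 : ∀ l, c l * ∑ j ∈ Finset.univ.filter (fun j => g j = k), prob (σ l) (E j)
        = if l = k then c l else 0 := by
      intro l
      rw [hsum l k]
      split <;> simp
    rw [Finset.sum_congr rfl fun l _ => h2 l, Finset.sum_ite_eq' Finset.univ k c] at h0
    simpa using h0
  have hcard := li.fintype_card_le_finrank
  rw [Fintype.card_fin] at hcard
  calc K ≤ Module.finrank ℝ (Mat (d ^ n)) := hcard
    _ = d ^ n * d ^ n * 2 := by
      rw [Module.finrank_matrix, Complex.finrank_real_complex, Fintype.card_fin]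

lemma term_le {d : ℕ} {ℰ : Mat d →ₗ[ℂ] Mat d} (hℰ : IsQuantumChannel ℰ) (q : ℕ+) :
    Real.log (maxK ℰ (q : ℕ)) / (q : ℝ) ≤ max 0 (Real.log (d * d * 2 : ℕ)) := by
  set L := max 0 (Real.log (d * d * 2 : ℕ)) with hL
  have hq : (0 : ℝ) < (q : ℝ) := by exact_mod_cast q.pos
  rcases Nat.eq_zero_or_pos (maxK ℰ (q : ℕ)) with h0 | hpos
  · rw [h0]
    simp [hL]
  · have hKle : maxK ℰ (q : ℕ) ≤ (d * d * 2) ^ (q : ℕ) := by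
      have h1 : maxK ℰ (q : ℕ) ≤ d ^ (q : ℕ) * d ^ (q : ℕ) * 2 :=
        csSup_le' fun K hK => codeExists_card_le hℰ hK
      have h2 : d ^ (q : ℕ) * d ^ (q : ℕ) * 2 ≤ (d * d * 2) ^ (q : ℕ) := by
        rw [mul_pow, mul_pow]
        have : (2 : ℕ) ≤ 2 ^ (q : ℕ) := by
          calc (2:ℕ) = 2 ^ 1 := (pow_one 2).symm
            _ ≤ 2 ^ (q : ℕ) := Nat.pow_le_pow_right (by norm_num) q.pos
        exact Nat.mul_le_mul_left _ this
      omega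
    have hlog : Real.log (maxK ℰ (q : ℕ)) ≤ (q : ℝ) * Real.log (d * d * 2 : ℕ) := by
      have hcast : ((maxK ℰ (q : ℕ) : ℕ) : ℝ) ≤ (((d * d * 2) ^ (q : ℕ) : ℕ) : ℝ) := by
        exact_mod_cast hKle
      calc Real.log (maxK ℰ (q : ℕ)) ≤ Real.log (((d * d * 2) ^ (q : ℕ) : ℕ) : ℝ) :=
            Real.log_le_log (by exact_mod_cast hpos) hcast
        _ = (q : ℝ) * Real.log (d * d * 2 : ℕ) := by
            push_cast
            rw [Real.log_pow]
    rw [div_le_iff₀ hq]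
    calc Real.log (maxK ℰ (q : ℕ)) ≤ (q : ℝ) * Real.log (d * d * 2 : ℕ) := hlog
      _ ≤ (q : ℝ) * L := by
          exact mul_le_mul_of_nonneg_left (le_max_right _ _) (le_of_lt hq)
      _ = L * (q : ℝ) := mul_comm _ _

lemma C0_bddAbove {d : ℕ} {ℰ : Mat d →ₗ[ℂ] Mat d} (hℰ : IsQuantumChannel ℰ) :
    BddAbove (Set.range fun q : ℕ+ => Real.log (maxK ℰ (q : ℕ)) / (q : ℝ)) := by
  refine ⟨max 0 (Real.log (d * d * 2 : ℕ)), ?_⟩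
  rintro x ⟨q, rfl⟩
  exact term_le hℰ q

def e1 (d : ℕ) : Fin (d ^ 1) ≃ Fin d :=
  finFunctionFinEquiv.symm.trans (Equiv.funUnique (Fin 1) (Fin d))

lemma kronPow_one {d : ℕ} (M : Fin 1 → Mat d) :
    kronPow M = (M 0).submatrix (e1 d) (e1 d) := by
  ext x y
  simp only [kronPow, Matrix.of_apply, Fin.prod_univ_one, Matrix.submatrix_apply]
  have h0 : ∀ z : Fin (d ^ 1), e1 d z = finFunctionFinEquiv.symm z 0 := by
    intro z
    simp only [e1, Equiv.trans_apply, Equiv.funUnique_apply]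
    exact congrArg _ (Subsingleton.elim _ _)
  rw [h0, h0]

lemma prob_submatrix {d : ℕ} (A B : Mat d) :
    prob (A.submatrix (e1 d) (e1 d)) (B.submatrix (e1 d) (e1 d)) = prob A B := by
  unfold prob
  rw [Matrix.submatrix_mul_equiv]
  congr 1
  simp only [Matrix.trace, Matrix.diag, Matrix.submatrix_apply]
  exact Equiv.sum_comp (e1 d) fun z => (A * B) z z

lemma reverse_dir {d : ℕ} {ℰ : Mat d →ₗ[ℂ] Mat d} (hℰ : IsQuantumChannel ℰ)
    (h : ∃ (ρa ρb : Mat d) (N : ℕ) (E : Fin N → Mat d),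
        IsDensityMatrix ρa ∧ IsDensityMatrix ρb ∧ IsPOVM E ∧
        NonAdjacent (ℰ ρa) (ℰ ρb) E) : 0 < C0 ℰ := by
  classical
  obtain ⟨ρa, ρb, N, E, hρa, hρb, hE, hNA⟩ := h
  have hcode : CodeExists ℰ 1 2 := by
    refine ⟨fun k _ => if k = 0 then ρa else ρb, N,
      fun j => (E j).submatrix (e1 d) (e1 d),
      fun j => if 0 < prob (ℰ ρa) (E j) then 0 else 1, ?_, ⟨?_, ?_⟩, ?_⟩
    · intro k i
      dsimp only
      split
      · exact hρa
      · exact hρb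
    · intro j
      exact (Matrix.posSemidef_submatrix_equiv (e1 d)).mpr (hE.1 j)
    · have : (∑ j, (E j).submatrix (e1 d) (e1 d)) = (∑ j, E j).submatrix (e1 d) (e1 d) := by
        ext x y
        simp [Matrix.submatrix_apply, Finset.sum_apply, Matrix.sum_apply]
      rw [this, hE.2, Matrix.submatrix_one_equiv]
    · intro k j hp
      have hker : (kronPow fun i => ℰ ((fun (k : Fin 2) (_ : Fin 1) => if k = 0 then ρa else ρb) k i))
          = (ℰ (if k = 0 then ρa else ρb)).submatrix (e1 d) (e1 d) := kronPow_one _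
      rw [hker, prob_submatrix] at hp
      by_cases hk : k = 0
      · subst hk
        rw [if_pos rfl] at hp
        simp [hp]
      · have hk1 : k = 1 := by omega
        subst hk1
        rw [if_neg (by simp)] at hp
        have hna : ¬ 0 < prob (ℰ ρa) (E j) := fun hh => hNA j ⟨hh, hp⟩
        simp [hna]
  have hb : BddAbove {K | CodeExists ℰ 1 K} :=
    ⟨d ^ 1 * d ^ 1 * 2, fun K hK => codeExists_card_le hℰ hK⟩
  have h2 : 2 ≤ maxK ℰ 1 := le_csSup hb hcode
  have hlog : 0 < Real.log (maxK ℰ ((1 : ℕ+) : ℕ)) / ((1 : ℕ+) : ℝ) := by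
    have : (1 : ℝ) < (maxK ℰ 1 : ℝ) := by exact_mod_cast h2
    simpa using Real.log_pos this
  calc (0 : ℝ) < Real.log (maxK ℰ ((1 : ℕ+) : ℕ)) / ((1 : ℕ+) : ℝ) := hlog
    _ ≤ C0 ℰ := le_ciSup (C0_bddAbove hℰ) (1 : ℕ+)

lemma forward_dir {d : ℕ} {ℰ : Mat d →ₗ[ℂ] Mat d} (hℰ : IsQuantumChannel ℰ)
    (hpos : 0 < C0 ℰ) :
    ∃ (ρa ρb : Mat d) (N : ℕ) (E : Fin N → Mat d),
        IsDensityMatrix ρa ∧ IsDensityMatrix ρb ∧ IsPOVM E ∧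
        NonAdjacent (ℰ ρa) (ℰ ρb) E := by
  classical
  -- extract a length `q` code of size ≥ 2
  have hex : ∃ q : ℕ+, 0 < Real.log (maxK ℰ (q : ℕ)) / (q : ℝ) := by
    by_contra hq
    push_neg at hq
    have : C0 ℰ ≤ 0 := Real.iSup_nonpos fun q => hq q
    exact absurd hpos (not_lt.mpr this)
  obtain ⟨q, hq⟩ := hex
  have hqpos : (0 : ℝ) < (q : ℝ) := by exact_mod_cast q.pos
  have hlogpos : 0 < Real.log (maxK ℰ (q : ℕ)) := by
    by_contra hl
    push_neg at hl
    have : Real.log (maxK ℰ (q : ℕ)) / (q : ℝ) ≤ 0 :=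
      div_nonpos_iff.mpr (Or.inr ⟨hl, le_of_lt hqpos⟩)
    linarith
  have hK2 : 2 ≤ maxK ℰ (q : ℕ) := by
    by_contra h2
    push_neg at h2
    have h01 : maxK ℰ (q : ℕ) = 0 ∨ maxK ℰ (q : ℕ) = 1 := by omega
    rcases h01 with h | h <;> rw [h] at hlogpos <;> norm_num at hlogpos
  have hne : {K | CodeExists ℰ (q : ℕ) K}.Nonempty := by
    by_contra hn
    rw [Set.not_nonempty_iff_eq_empty] at hn
    have : maxK ℰ (q : ℕ) = 0 := by rw [maxK, hn]; exact csSup_empty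
    omega
  have hmem : CodeExists ℰ (q : ℕ) (maxK ℰ (q : ℕ)) :=
    Nat.sSup_mem hne ⟨d ^ (q : ℕ) * d ^ (q : ℕ) * 2, fun K hK => codeExists_card_le hℰ hK⟩
  obtain ⟨ρ, N, E, g, hρ, hE, hg⟩ := hmem
  set k₀ : Fin (maxK ℰ (q : ℕ)) := ⟨0, by omega⟩ with hk₀
  set k₁ : Fin (maxK ℰ (q : ℕ)) := ⟨1, by omega⟩ with hk₁
  have hk01 : k₀ ≠ k₁ := by simp [hk₀, hk₁, Fin.ext_iff]
  set σ : Mat (d ^ (q : ℕ)) := kronPow fun i => ℰ (ρ k₀ i) with hσdef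
  set τ : Mat (d ^ (q : ℕ)) := kronPow fun i => ℰ (ρ k₁ i) with hτdef
  have hσpsd : σ.PosSemidef := kronPow_posSemidef fun i => hℰ.2 _ (hρ k₀ i).1
  have hτpsd : τ.PosSemidef := kronPow_posSemidef fun i => hℰ.2 _ (hρ k₁ i).1
  set P : Mat (d ^ (q : ℕ)) := ∑ j ∈ Finset.univ.filter (fun j => g j = k₀), E j with hPdef
  set Q : Mat (d ^ (q : ℕ)) := ∑ j ∈ Finset.univ.filter (fun j => ¬ g j = k₀), E j with hQdef
  have hPpsd : P.PosSemidef := posSemidef_sum _ _ fun j _ => hE.1 j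
  have hQpsd : Q.PosSemidef := posSemidef_sum _ _ fun j _ => hE.1 j
  have hτP : τ * P = 0 := by
    have htrace : prob τ P = 0 := by
      have hsum0 : (τ * P).trace = 0 := by
        rw [hPdef, Finset.mul_sum, Matrix.trace_sum]
        refine Finset.sum_eq_zero fun j hj => ?_
        have hj0 : g j = k₀ := (Finset.mem_filter.mp hj).2
        have hp := psd_key hτpsd (hE.1 j)
        have hpz : prob τ (E j) = 0 := by
          rcases lt_or_eq_of_le hp.1 with hlt | heq
          · exact absurd (hg k₁ j hlt) (by rw [hj0]; exact fun hh => hk01 hh)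
          · exact heq.symm
        rw [hp.2.1, hpz]
        simp
      simp [prob, hsum0]
    exact (psd_key hτpsd hPpsd).2.2 htrace
  have hσQ : σ * Q = 0 := by
    have htrace : prob σ Q = 0 := by
      have hsum0 : (σ * Q).trace = 0 := by
        rw [hQdef, Finset.mul_sum, Matrix.trace_sum]
        refine Finset.sum_eq_zero fun j hj => ?_
        have hj0 : ¬ g j = k₀ := (Finset.mem_filter.mp hj).2
        have hp := psd_key hσpsd (hE.1 j)
        have hpz : prob σ (E j) = 0 := by
          rcases lt_or_eq_of_le hp.1 with hlt | heq
          · exact absurd (hg k₀ j hlt) hj0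
          · exact heq.symm
        rw [hp.2.1, hpz]
        simp
      simp [prob, hsum0]
    exact (psd_key hσpsd hQpsd).2.2 htrace
  have hPQ : P + Q = 1 := by
    rw [hPdef, hQdef, Finset.sum_filter_add_sum_filter_not]
    exact hE.2
  have hσP : σ * P = σ := by
    have := congrArg (fun X => σ * X) hPQ
    simp only [Matrix.mul_add, Matrix.mul_one] at this
    rwa [hσQ, add_zero] at this
  have hPτ : P * τ = 0 := by
    have := congrArg Matrix.conjTranspose hτP
    rwa [Matrix.conjTranspose_mul, hτpsd.1.eq, hPpsd.1.eq, Matrix.conjTranspose_zero] at this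
  have hστ : σ * τ = 0 := by
    rw [← hσP, Matrix.mul_assoc, hPτ, Matrix.mul_zero]
  have hkron : kronPow (fun i => ℰ (ρ k₀ i) * ℰ (ρ k₁ i)) = 0 := by
    rw [← kronPow_mul]
    exact hστ
  have hzero : ∃ i, ℰ (ρ k₀ i) * ℰ (ρ k₁ i) = 0 := by
    by_contra hall
    push_neg at hall
    exact kronPow_ne_zero hall hkron
  obtain ⟨i, hi⟩ := hzero
  obtain ⟨F, hFpsd, h1Fpsd, hAF, hBF⟩ :=
    exists_support_proj (hℰ.2 _ (hρ k₀ i).1) (hℰ.2 _ (hρ k₁ i).1) hi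
  refine ⟨ρ k₀ i, ρ k₁ i, 2, ![F, 1 - F], hρ k₀ i, hρ k₁ i, ⟨?_, ?_⟩, ?_⟩
  · intro j
    fin_cases j
    · simpa using hFpsd
    · simpa using h1Fpsd
  · rw [Fin.sum_univ_two]
    simp
  · intro j
    fin_cases j
    · rintro ⟨-, h₂⟩
      have h₂' : 0 < (ℰ (ρ k₁ i) * F).trace.re := h₂
      rw [hBF] at h₂'
      simp at h₂'
    · rintro ⟨h₁, -⟩
      have hz : ℰ (ρ k₀ i) * (1 - F) = 0 := by
        rw [Matrix.mul_sub, Matrix.mul_one, hAF, sub_self]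
      have h₁' : 0 < (ℰ (ρ k₀ i) * (1 - F)).trace.re := h₁
      rw [hz] at h₁'
      simp at h₁'

/-- **Theorem (positivity of the zero-error capacity).**
`C⁰(ℰ) > 0` iff there exist density matrices `ρa, ρb` and a POVM `{E j}` such that
the channel outputs `ℰ ρa` and `ℰ ρb` are non-adjacent under `{E j}`. -/
theorem zero_error_capacity_pos_iff {d : ℕ} (ℰ : Mat d →ₗ[ℂ] Mat d)
    (hℰ : IsQuantumChannel ℰ) :
    0 < C0 ℰ ↔
      ∃ (ρa ρb : Mat d) (N : ℕ) (E : Fin N → Mat d),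
        IsDensityMatrix ρa ∧ IsDensityMatrix ρb ∧ IsPOVM E ∧
        NonAdjacent (ℰ ρa) (ℰ ρb) E := by
  exact ⟨fun h => forward_dir hℰ h, fun h => reverse_dir hℰ h⟩
end

section
/- Let σ_a and σ_b be density matrices on ℂ^d. There exists a POVM {E_j}_{j∈J} on ℂ^d under which σ_a and σ_b are non-adjacent if and only if σ_a σ_b = 0 (equivalently, tr(σ_a σ_b) = 0). -/
open Matrix BigOperators ComplexOrder

lemma trace_conjT_mul_self (d : ℕ) (X : Mat d) :
    Matrix.trace (Xᴴ * X) = ((∑ j, ∑ i, Complex.normSq (X i j) : ℝ) : ℂ) := by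
  simp only [Matrix.trace, Matrix.diag_apply, Matrix.mul_apply, Matrix.conjTranspose_apply,
    Complex.ofReal_sum]
  refine Finset.sum_congr rfl fun j _ => Finset.sum_congr rfl fun i _ => ?_
  rw [mul_comm, RCLike.star_def, Complex.mul_conj]

open scoped MatrixOrder in
lemma key {d : ℕ} {A B : Mat d} (hA : A.PosSemidef) (hB : B.PosSemidef) :
    0 ≤ (Matrix.trace (A * B)).re ∧ ((Matrix.trace (A * B)).re = 0 → A * B = 0) := by
  set sa := CFC.sqrt A with hsa_def
  set sb := CFC.sqrt B with hsb_def
  have hsa : saᴴ = sa := (CFC.sqrt_nonneg A).posSemidef.1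
  have hsb : sbᴴ = sb := (CFC.sqrt_nonneg B).posSemidef.1
  have h1 : Matrix.trace (A * B) = Matrix.trace ((sb * sa)ᴴ * (sb * sa)) := by
    rw [conjTranspose_mul, hsa, hsb]
    calc Matrix.trace (A * B) = Matrix.trace (B * A) := trace_mul_comm _ _
    _ = Matrix.trace (sb * (sb * sa * sa)) := by
        rw [← CFC.sqrt_mul_sqrt_self B hB.nonneg, ← CFC.sqrt_mul_sqrt_self A hA.nonneg, ← hsa_def, ← hsb_def]
        simp only [Matrix.mul_assoc]
    _ = Matrix.trace ((sb * sa * sa) * sb) := trace_mul_comm _ _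
    _ = Matrix.trace ((sb * sa) * (sa * sb)) := by simp only [Matrix.mul_assoc]
    _ = Matrix.trace ((sa * sb) * (sb * sa)) := trace_mul_comm _ _
  rw [h1, trace_conjT_mul_self]
  simp only [Complex.ofReal_re]
  constructor
  · exact Finset.sum_nonneg fun j _ => Finset.sum_nonneg fun i _ => Complex.normSq_nonneg _
  · intro hz
    have hX : sb * sa = 0 := by
      ext i j
      have h0 : ∀ j ∈ Finset.univ, (0:ℝ) ≤ ∑ i, Complex.normSq ((sb * sa) i j) :=
        fun j _ => Finset.sum_nonneg fun i _ => Complex.normSq_nonneg _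
      have h2 := (Finset.sum_eq_zero_iff_of_nonneg h0).mp hz j (Finset.mem_univ j)
      have h3 := (Finset.sum_eq_zero_iff_of_nonneg
        (fun i _ => Complex.normSq_nonneg ((sb * sa) i j))).mp h2 i (Finset.mem_univ i)
      simpa using Complex.normSq_eq_zero.mp h3
    have hBA : B * A = 0 := by
      calc B * A = sb * ((sb * sa) * sa) := by
            rw [← CFC.sqrt_mul_sqrt_self B hB.nonneg, ← CFC.sqrt_mul_sqrt_self A hA.nonneg, ← hsa_def, ← hsb_def]
            simp only [Matrix.mul_assoc]
      _ = 0 := by rw [hX, Matrix.zero_mul, Matrix.mul_zero]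
    calc A * B = (B * A)ᴴ := by rw [conjTranspose_mul, hA.1, hB.1]
    _ = 0 := by rw [hBA, conjTranspose_zero]

/-- **Theorem.** Two density matrices admit a POVM under which they are
non-adjacent iff `σa * σb = 0`. -/
theorem exists_povm_nonAdjacent_iff {d : ℕ} (σa σb : Mat d)
    (ha : IsDensityMatrix σa) (hb : IsDensityMatrix σb) :
    (∃ (N : ℕ) (E : Fin N → Mat d), IsPOVM E ∧ NonAdjacent σa σb E) ↔
      σa * σb = 0 := by
  constructor
  · rintro ⟨N, E, ⟨hEpsd, hEsum⟩, hNA⟩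
    have hterm : ∀ j, σa * E j * σb = 0 := by
      intro j
      have hka := key ha.1 (hEpsd j)
      have hkb := key hb.1 (hEpsd j)
      have := hNA j
      rcases not_and_or.mp this with h | h
      · have hz : (Matrix.trace (σa * E j)).re = 0 := le_antisymm (not_lt.mp h) hka.1
        rw [hka.2 hz, Matrix.zero_mul]
      · have hz : (Matrix.trace (σb * E j)).re = 0 := le_antisymm (not_lt.mp h) hkb.1
        have hEb : E j * σb = 0 := by
          calc E j * σb = (σb * E j)ᴴ := by rw [conjTranspose_mul, hb.1.1, (hEpsd j).1]
          _ = 0 := by rw [hkb.2 hz, conjTranspose_zero]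
        rw [Matrix.mul_assoc, hEb, Matrix.mul_zero]
    calc σa * σb = σa * (∑ j, E j) * σb := by rw [hEsum, Matrix.mul_one]
    _ = ∑ j, σa * E j * σb := by rw [Finset.mul_sum, Finset.sum_mul]
    _ = 0 := Finset.sum_eq_zero fun j _ => hterm j
  · intro hab
    have hHa : σa.IsHermitian := ha.1.1
    set U : Mat d := (hHa.eigenvectorUnitary : Mat d) with hU_def
    set D : Mat d := diagonal (RCLike.ofReal ∘ hHa.eigenvalues) with hD_def
    set f : Fin d → ℂ := fun i => if hHa.eigenvalues i = 0 then 0 else 1 with hf_def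
    set P : Mat d := U * diagonal f * star U with hP_def
    have hU1 : U * star U = 1 := Matrix.mem_unitaryGroup_iff.mp hHa.eigenvectorUnitary.2
    have hU2 : star U * U = 1 := Matrix.mem_unitaryGroup_iff'.mp hHa.eigenvectorUnitary.2
    have hspec : σa = U * D * star U := hHa.spectral_theorem
    -- P is PSD
    have hPpsd : P.PosSemidef := by
      have : (diagonal f).PosSemidef := by
        refine posSemidef_diagonal_iff.mpr fun i => ?_
        by_cases h : hHa.eigenvalues i = 0 <;> simp [hf_def, h] <;> norm_num
      simpa [hP_def, Matrix.star_eq_conjTranspose] using this.mul_mul_conjTranspose_same U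
    -- 1 - P is PSD
    have h1Ppsd : (1 - P).PosSemidef := by
      have hdiag : (diagonal (fun i => 1 - f i)).PosSemidef := by
        refine posSemidef_diagonal_iff.mpr fun i => ?_
        by_cases h : hHa.eigenvalues i = 0 <;> simp [hf_def, h] <;> norm_num
      have : 1 - P = U * diagonal (fun i => 1 - f i) * star U := by
        have : diagonal (fun i => 1 - f i) = 1 - diagonal f := by
          rw [← diagonal_one, diagonal_sub]
        rw [this, Matrix.mul_sub, Matrix.mul_one, Matrix.sub_mul, hU1, hP_def]
      rw [this]
      simpa [Matrix.star_eq_conjTranspose] using hdiag.mul_mul_conjTranspose_same U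
    -- σa * P = σa
    have hσaP : σa * P = σa := by
      have hDf : D * diagonal f = D := by
        have hfun : (fun i => (RCLike.ofReal ∘ hHa.eigenvalues) i * f i)
            = (RCLike.ofReal ∘ hHa.eigenvalues) := by
          funext i
          by_cases h : hHa.eigenvalues i = 0 <;> simp [hf_def, h, Function.comp]
        rw [hD_def, diagonal_mul_diagonal, hfun]
      calc σa * P = U * D * (star U * U) * diagonal f * star U := by
            rw [hspec, hP_def]; simp only [Matrix.mul_assoc]
      _ = U * (D * diagonal f) * star U := by rw [hU2]; simp only [Matrix.mul_assoc, Matrix.one_mul]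
      _ = σa := by rw [hDf, hspec]
    -- P * σb = 0
    have hPσb : P * σb = 0 := by
      have hDM : D * (star U * σb) = 0 := by
        have h := hab
        rw [hspec] at h
        have h2 : star U * (U * D * star U * σb) = 0 := by rw [h, Matrix.mul_zero]
        simp only [← Matrix.mul_assoc] at h2
        rw [hU2, Matrix.one_mul] at h2
        simpa [Matrix.mul_assoc] using h2
      rw [hD_def] at hDM
      have hfM : diagonal f * (star U * σb) = 0 := by
        ext i j
        have hDij := congrFun (congrFun hDM i) j
        simp only [Matrix.diagonal_mul, Matrix.zero_apply, Function.comp_apply] at hDij ⊢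
        by_cases h : hHa.eigenvalues i = 0
        · simp [hf_def, h]
        · rcases mul_eq_zero.mp hDij with h' | h'
          · exact absurd (Complex.ofReal_eq_zero.mp h') h
          · simp [hf_def, h, h']
      calc P * σb = U * (diagonal f * (star U * σb)) := by
            rw [hP_def]; simp only [Matrix.mul_assoc]
      _ = 0 := by rw [hfM, Matrix.mul_zero]
    have hσbP : σb * P = 0 := by
      calc σb * P = (P * σb)ᴴ := by rw [conjTranspose_mul, hb.1.1, hPpsd.1]
      _ = 0 := by rw [hPσb, conjTranspose_zero]
    refine ⟨2, ![1 - P, P], ⟨?_, ?_⟩, ?_⟩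
    · intro j
      fin_cases j
      · exact h1Ppsd
      · exact hPpsd
    · simp [Fin.sum_univ_two]
    · intro j
      fin_cases j
      · rintro ⟨h1, -⟩
        have hz : prob σa (1 - P) = 0 := by
          simp [prob, Matrix.mul_sub, Matrix.mul_one, hσaP]
        have h1' : 0 < prob σa (1 - P) := h1
        rw [hz] at h1'
        exact lt_irrefl 0 h1'
      · rintro ⟨-, h2⟩
        have hz : prob σb P = 0 := by simp [prob, hσbP]
        have h2' : 0 < prob σb P := h2
        rw [hz] at h2'
        exact lt_irrefl 0 h2'
end
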